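/- The function ξ ↦ S²(ξ) is continuous on the domain D := {ξ ∈ ℝ² : 0 < |Mξ₁|/|ξ| < M_c}; moreover there is the explicit modulus |S²(ξ) − S²(ξ₀)| ≤ (g/M²) ‖ρ̄'‖_{L^∞(ℝ)} · | |ξ|²/ξ₁² − |ξ₀|²/ξ₀₁² | for ξ, ξ₀ ∈ D. -/

import Mathlib

open MeasureTheory

/-- `ψ ∈ H¹(ℝ)` with weak derivative `ψ'`. -/
def IsH1 (ψ ψ' : ℝ → ℝ) : Prop :=
  MemLp ψ 2 volume ∧ MemLp ψ' 2 volume ∧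
    ∀ x : ℝ, ψ x = ψ 0 + ∫ t in (0:ℝ)..x, ψ' t

/-- The functional `Q(ξ, ψ) = (g|ξ|²/(Mξ₁)²) ∫ ρ̄' ψ² − ∫ |ψ'|²`. -/
noncomputable def Qfun (g M : ℝ) (ξ : ℝ × ℝ) (ρ' ψ ψ' : ℝ → ℝ) : ℝ :=
  g * (ξ.1 ^ 2 + ξ.2 ^ 2) / (M * ξ.1) ^ 2 * (∫ x, ρ' x * (ψ x) ^ 2) - ∫ x, (ψ' x) ^ 2

/-- `S2 ξ` is the achieved supremum of `Q(ξ, ·)` over the unit `L²` sphere of `H¹(ℝ)`. -/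
def IsMaxS2 (g M : ℝ) (ρ' : ℝ → ℝ) (S2 : ℝ × ℝ → ℝ) (ξ : ℝ × ℝ) : Prop :=
  (∃ ψ ψ' : ℝ → ℝ, IsH1 ψ ψ' ∧ (∫ x, (ψ x) ^ 2) = 1 ∧ S2 ξ = Qfun g M ξ ρ' ψ ψ') ∧
    ∀ ψ ψ' : ℝ → ℝ, IsH1 ψ ψ' → (∫ x, (ψ x) ^ 2) = 1 → Qfun g M ξ ρ' ψ ψ' ≤ S2 ξ

/-! `Q(ξ, ψ)` depends on `ξ` only through the factor `|ξ|²/ξ₁²` in front of `∫ ρ̄' ψ²`, which is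
at most `‖ρ̄'‖_∞` in absolute value on the unit sphere. So `Q(ξ, ·)` and `Q(ξ₀, ·)` are uniformly
close, and comparing them at a maximiser for `ξ` bounds `S²(ξ) − S²(ξ₀)`; symmetry does the rest. -/

lemma abs_integral_mul_sq_le {α : Type*} [MeasurableSpace α] {μ : Measure α} {f ψ : α → ℝ}
    {R : ℝ} (hf : ∀ x, |f x| ≤ R) (hψ : Integrable (fun x => ψ x ^ 2) μ) :
    |∫ x, f x * ψ x ^ 2 ∂μ| ≤ R * ∫ x, ψ x ^ 2 ∂μ := by
  calc |∫ x, f x * ψ x ^ 2 ∂μ| ≤ ∫ x, |f x * ψ x ^ 2| ∂μ := abs_integral_le_integral_abs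
    _ ≤ ∫ x, R * ψ x ^ 2 ∂μ := by
      refine integral_mono_of_nonneg (.of_forall fun x => abs_nonneg _) (hψ.const_mul R)
        (.of_forall fun x => ?_)
      show |f x * ψ x ^ 2| ≤ R * ψ x ^ 2
      rw [abs_mul, abs_of_nonneg (sq_nonneg (ψ x))]
      exact mul_le_mul_of_nonneg_right (hf x) (sq_nonneg _)
    _ = R * ∫ x, ψ x ^ 2 ∂μ := integral_const_mul R _

lemma Qfun_sub_Qfun (g M : ℝ) (ξ ξ₀ : ℝ × ℝ) (ρ' ψ ψ' : ℝ → ℝ) :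
    Qfun g M ξ ρ' ψ ψ' - Qfun g M ξ₀ ρ' ψ ψ' = g / M ^ 2 *
      ((ξ.1 ^ 2 + ξ.2 ^ 2) / ξ.1 ^ 2 - (ξ₀.1 ^ 2 + ξ₀.2 ^ 2) / ξ₀.1 ^ 2) *
        ∫ x, ρ' x * ψ x ^ 2 := by
  simp only [Qfun, mul_pow]
  ring

lemma abs_Qfun_sub_Qfun_le {g M : ℝ} (hg : 0 ≤ g) (ξ ξ₀ : ℝ × ℝ) {ρ' ψ ψ' : ℝ → ℝ}
    {R : ℝ} (hR : ∀ x, |ρ' x| ≤ R) (hψ : IsH1 ψ ψ') (hnorm : ∫ x, ψ x ^ 2 = 1) :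
    |Qfun g M ξ ρ' ψ ψ' - Qfun g M ξ₀ ρ' ψ ψ'| ≤ g / M ^ 2 * R *
      |(ξ.1 ^ 2 + ξ.2 ^ 2) / ξ.1 ^ 2 - (ξ₀.1 ^ 2 + ξ₀.2 ^ 2) / ξ₀.1 ^ 2| := by
  have hI : |∫ x, ρ' x * ψ x ^ 2| ≤ R := by
    simpa only [hnorm, mul_one] using abs_integral_mul_sq_le hR hψ.1.integrable_sq
  rw [Qfun_sub_Qfun, abs_mul, abs_mul, abs_of_nonneg (by positivity : 0 ≤ g / M ^ 2),
    mul_right_comm]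
  gcongr

lemma IsMaxS2.sub_le {g M : ℝ} {ρ' : ℝ → ℝ} {S2 : ℝ × ℝ → ℝ} {ξ ξ₀ : ℝ × ℝ} {C : ℝ}
    (hmax : IsMaxS2 g M ρ' S2 ξ) (hmax₀ : IsMaxS2 g M ρ' S2 ξ₀)
    (hC : ∀ ψ ψ', IsH1 ψ ψ' → ∫ x, ψ x ^ 2 = 1 → |Qfun g M ξ ρ' ψ ψ' - Qfun g M ξ₀ ρ' ψ ψ'| ≤ C) :
    S2 ξ - S2 ξ₀ ≤ C := by
  obtain ⟨⟨ψ, ψ', hψ, hnorm, hS⟩, -⟩ := hmax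
  calc S2 ξ - S2 ξ₀ ≤ Qfun g M ξ ρ' ψ ψ' - Qfun g M ξ₀ ρ' ψ ψ' := by
        rw [hS]; linarith [hmax₀.2 ψ ψ' hψ hnorm]
    _ ≤ C := (le_abs_self _).trans (hC ψ ψ' hψ hnorm)

theorem statement5_general (g M : ℝ) (hg : 0 < g)
    (ρ' : ℝ → ℝ)
    (S2 : ℝ × ℝ → ℝ)
    (ξ ξ₀ : ℝ × ℝ)
    (hmax : IsMaxS2 g M ρ' S2 ξ) (hmax₀ : IsMaxS2 g M ρ' S2 ξ₀)
    (R : ℝ) (hR : ∀ x, |ρ' x| ≤ R) :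
    |S2 ξ - S2 ξ₀| ≤ g / M ^ 2 * R *
      |(ξ.1 ^ 2 + ξ.2 ^ 2) / ξ.1 ^ 2 - (ξ₀.1 ^ 2 + ξ₀.2 ^ 2) / ξ₀.1 ^ 2| := by
  rw [abs_sub_le_iff]
  constructor
  · exact hmax.sub_le hmax₀ fun ψ ψ' hψ hnorm => abs_Qfun_sub_Qfun_le hg.le ξ ξ₀ hR hψ hnorm
  · rw [abs_sub_comm]
    exact hmax₀.sub_le hmax fun ψ ψ' hψ hnorm => abs_Qfun_sub_Qfun_le hg.le ξ₀ ξ hR hψ hnorm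

/-- `ξ ↦ S²(ξ)` is continuous on `D = {ξ : 0 < |Mξ₁|/|ξ| < M_c}`, with the explicit modulus
`|S²(ξ) − S²(ξ₀)| ≤ (g/M²)‖ρ̄'‖_∞ · | |ξ|²/ξ₁² − |ξ₀|²/ξ₀₁² |`. -/
theorem statement5 (g M : ℝ) (hg : 0 < g) (hM : M ≠ 0)
    (ρ' : ℝ → ℝ) (hcont : Continuous ρ') (hsupp : HasCompactSupport ρ')
    (S2 : ℝ × ℝ → ℝ)
    (ξ ξ₀ : ℝ × ℝ) (hξ1 : ξ.1 ≠ 0) (hξ01 : ξ₀.1 ≠ 0)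
    (hmax : IsMaxS2 g M ρ' S2 ξ) (hmax₀ : IsMaxS2 g M ρ' S2 ξ₀)
    (R : ℝ) (hR : ∀ x, |ρ' x| ≤ R) :
    |S2 ξ - S2 ξ₀| ≤ g / M ^ 2 * R *
      |(ξ.1 ^ 2 + ξ.2 ^ 2) / ξ.1 ^ 2 - (ξ₀.1 ^ 2 + ξ₀.2 ^ 2) / ξ₀.1 ^ 2| :=
  statement5_general g M hg ρ' S2 ξ ξ₀ hmax hmax₀ R hR
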